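/- For η ≥ 0, μ > 0, x > 0 and y ≥ 0, Q_{η,μ}(x,y) = e^{-x} Σ_{n=0}^∞ (x^n / n!) · (Γ(η+μ+n)/Γ(μ+n)) · Q_{η+μ+n}(y), where Q_a(y) = Γ(a,y)/Γ(a) is the regularized upper incomplete gamma function. -/

import Mathlib

open Real MeasureTheory

/-- Modified Bessel function of the first kind `I_ν(z)` via its Maclaurin series. -/
noncomputable def besselI (ν z : ℝ) : ℝ :=
  (z / 2) ^ ν * ∑' n : ℕ, (z ^ 2 / 4) ^ n / (n.factorial * Real.Gamma (ν + n + 1))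

/-- Upper incomplete gamma function `Γ(a, y)`. -/
noncomputable def uGamma (a y : ℝ) : ℝ := ∫ t in Set.Ioi y, t ^ (a - 1) * Real.exp (-t)

/-- Regularized upper incomplete gamma function `Q_a(y) = Γ(a,y)/Γ(a)`. -/
noncomputable def regQ (a y : ℝ) : ℝ := uGamma a y / Real.Gamma a

/-- η-th moment of the partial non-central chi-squared distribution (Nuttall Q-function). -/
noncomputable def nuttallQ (η μ x y : ℝ) : ℝ :=
  x ^ ((1 - μ) / 2) *
    ∫ t in Set.Ioi y, t ^ (η + (μ - 1) / 2) * Real.exp (-t - x) *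
      besselI (μ - 1) (2 * Real.sqrt (x * t))

/-- Generalized Marcum Q-function. -/
noncomputable def marcumQ (μ x y : ℝ) : ℝ := nuttallQ 0 μ x y

/-- Complementary Marcum function `P_μ(x,y)`. -/
noncomputable def marcumP (μ x y : ℝ) : ℝ :=
  x ^ ((1 - μ) / 2) *
    ∫ t in Set.Ioc 0 y, t ^ ((μ - 1) / 2) * Real.exp (-t - x) *
      besselI (μ - 1) (2 * Real.sqrt (x * t))

/-! Expanding `I_{μ-1}(2√(xt))` in its Maclaurin series turns the integrand of `Q_{η,μ}(x,y)`
into `e^{-x} x^{(μ-1)/2} Σₙ xⁿ/(n! Γ(μ+n)) · t^{η+μ+n-1} e^{-t}`, a series of nonnegative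
gamma integrands whose `n`-th term integrates over `(y, ∞)` to `xⁿ Γ(η+μ+n, y)/(n! Γ(μ+n))`.
These integrals are at most `xⁿ Γ(η+μ+n)/(n! Γ(μ+n))`, a series that converges by the ratio
test, so integration and summation commute. -/

open Filter Topology Set Nat

lemma integrableOn_rpow_mul_exp_neg_Ioi {a y : ℝ} (ha : 0 < a) (hy : 0 ≤ y) :
    IntegrableOn (fun t => t ^ (a - 1) * exp (-t)) (Ioi y) :=
  ((GammaIntegral_convergent ha).congr_fun (fun _ _ => mul_comm _ _) measurableSet_Ioi).mono_set
    (Ioi_subset_Ioi hy)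

lemma rpow_mul_exp_neg_nonneg_of_mem_Ioi {a y t : ℝ} (hy : 0 ≤ y) (ht : t ∈ Ioi y) :
    0 ≤ t ^ (a - 1) * exp (-t) :=
  have : 0 < t := hy.trans_lt ht
  by positivity

lemma uGamma_nonneg {a y : ℝ} (hy : 0 ≤ y) : 0 ≤ uGamma a y :=
  setIntegral_nonneg measurableSet_Ioi fun _ => rpow_mul_exp_neg_nonneg_of_mem_Ioi hy

lemma uGamma_le_Gamma {a y : ℝ} (ha : 0 < a) (hy : 0 ≤ y) : uGamma a y ≤ Gamma a := by
  rw [Gamma_eq_integral ha, uGamma]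
  simp_rw [mul_comm (exp _)]
  exact setIntegral_mono_set (integrableOn_rpow_mul_exp_neg_Ioi ha le_rfl)
    ((ae_restrict_iff' measurableSet_Ioi).2 (ae_of_all _ fun _ =>
      rpow_mul_exp_neg_nonneg_of_mem_Ioi le_rfl))
    (Ioi_subset_Ioi hy).eventuallyLE

lemma regQ_nonneg {a y : ℝ} (ha : 0 < a) (hy : 0 ≤ y) : 0 ≤ regQ a y :=
  div_nonneg (uGamma_nonneg hy) (Gamma_pos_of_pos ha).le

lemma regQ_le_one {a y : ℝ} (ha : 0 < a) (hy : 0 ≤ y) : regQ a y ≤ 1 :=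
  div_le_one_of_le₀ (uGamma_le_Gamma ha hy) (Gamma_pos_of_pos ha).le

lemma integral_Ioi_tsum_mul_rpow_mul_exp_neg {c a : ℕ → ℝ} {y : ℝ} (hc : ∀ n, 0 ≤ c n)
    (ha : ∀ n, 0 < a n) (hy : 0 ≤ y) (hsum : Summable fun n => c n * uGamma (a n) y) :
    ∫ t in Ioi y, ∑' n, c n * (t ^ (a n - 1) * exp (-t)) = ∑' n, c n * uGamma (a n) y := by
  have hint : ∀ n, ∫ t in Ioi y, c n * (t ^ (a n - 1) * exp (-t)) = c n * uGamma (a n) y :=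
    fun n => integral_const_mul _ _
  have hnorm : ∀ n, ∫ t in Ioi y, ‖c n * (t ^ (a n - 1) * exp (-t))‖ =
      ∫ t in Ioi y, c n * (t ^ (a n - 1) * exp (-t)) := fun n =>
    setIntegral_congr_fun measurableSet_Ioi fun _ ht =>
      norm_of_nonneg (mul_nonneg (hc n) (rpow_mul_exp_neg_nonneg_of_mem_Ioi hy ht))
  rw [← integral_tsum_of_summable_integral_norm
    (fun n => (integrableOn_rpow_mul_exp_neg_Ioi (ha n) hy).const_mul (c n))
    (by simpa only [hnorm, hint] using hsum)]
  exact tsum_congr hint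

lemma summable_pow_div_factorial_mul_Gamma_div_Gamma {x a b : ℝ} (hx : 0 < x) (ha : 0 < a)
    (hb : 0 < b) : Summable fun n : ℕ => x ^ n / n ! * (Gamma (b + n) / Gamma (a + n)) := by
  set f : ℕ → ℝ := fun n => x ^ n / n ! * (Gamma (b + n) / Gamma (a + n))
  have hf_pos : ∀ n, 0 < f n := fun n => by positivity
  have hGamma_succ : ∀ {s : ℝ}, 0 < s → ∀ n : ℕ,
      Gamma (s + (n + 1)) = (s + n) * Gamma (s + n) := fun hs n => by
    rw [← add_assoc, Gamma_add_one (by positivity)]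
  have hratio : ∀ n,
      ‖f (n + 1)‖ / ‖f n‖ = (x * (1 + (b - a) / (a + n))) * (1 / ((n : ℝ) + 1)) := by
    intro n
    have : Gamma (a + n) ≠ 0 := by positivity
    have : Gamma (b + n) ≠ 0 := by positivity
    have : a + n ≠ 0 := by positivity
    rw [norm_of_nonneg (hf_pos _).le, norm_of_nonneg (hf_pos _).le]
    simp only [f, cast_succ, hGamma_succ ha, hGamma_succ hb, factorial_succ, pow_succ, cast_mul]
    field_simp
    ring
  have hlim : Tendsto (fun n : ℕ => (x * (1 + (b - a) / (a + n))) * (1 / ((n : ℝ) + 1)))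
      atTop (𝓝 ((x * (1 + 0)) * 0)) :=
    (tendsto_const_nhds.add (tendsto_const_nhds.div_atTop
      (tendsto_atTop_add_const_left _ a tendsto_natCast_atTop_atTop))).const_mul x |>.mul
      tendsto_one_div_add_atTop_nhds_zero_nat
  rw [mul_zero] at hlim
  exact summable_of_ratio_test_tendsto_lt_one one_pos
    (Eventually.of_forall fun n => (hf_pos n).ne') (hlim.congr fun n => (hratio n).symm)

lemma besselI_two_mul_sqrt {s : ℝ} (ν : ℝ) (hs : 0 ≤ s) :
    besselI ν (2 * √s) = s ^ (ν / 2) * ∑' n : ℕ, s ^ n / (n ! * Gamma (ν + n + 1)) := by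
  have hsqrt_rpow : √s ^ ν = s ^ (ν / 2) := by
    rw [sqrt_eq_rpow, ← rpow_mul hs, one_div_mul_eq_div]
  have hsq : (2 * √s) ^ 2 / 4 = s := by
    rw [mul_pow, sq_sqrt hs]; ring
  rw [besselI, mul_div_cancel_left₀ _ two_ne_zero, hsqrt_rpow, hsq]

lemma nuttallQ_integrand_eq_tsum {η μ x t : ℝ} (hx : 0 ≤ x) (ht : 0 < t) :
    t ^ (η + (μ - 1) / 2) * exp (-t - x) * besselI (μ - 1) (2 * √(x * t)) =
      exp (-x) * x ^ ((μ - 1) / 2) *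
        ∑' n : ℕ, x ^ n / (n ! * Gamma (μ + n)) * (t ^ (η + μ + n - 1) * exp (-t)) := by
  have hterm : ∀ n : ℕ, x ^ n / (n ! * Gamma (μ + n)) * (t ^ (η + μ + n - 1) * exp (-t)) =
      t ^ (η + μ - 1) * exp (-t) * ((x * t) ^ n / (n ! * Gamma (μ - 1 + n + 1))) := fun n => by
    rw [show η + μ + n - 1 = η + μ - 1 + n by ring, rpow_add ht, rpow_natCast,
      show μ - 1 + n + 1 = μ + n by ring]
    ring
  have ht_pow : t ^ (η + (μ - 1) / 2) * t ^ ((μ - 1) / 2) = t ^ (η + μ - 1) := by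
    rw [← rpow_add ht]; ring_nf
  rw [besselI_two_mul_sqrt _ (mul_nonneg hx ht.le), tsum_congr hterm, tsum_mul_left,
    mul_rpow hx ht.le, ← ht_pow, show -t - x = -t + -x by ring, exp_add]
  ring

theorem nuttallQ_series_regQ (η μ x y : ℝ) (hη : 0 ≤ η) (hμ : 0 < μ) (hx : 0 < x) (hy : 0 ≤ y) :
    nuttallQ η μ x y =
      Real.exp (-x) * ∑' n : ℕ,
        x ^ n / n.factorial * (Real.Gamma (η + μ + n) / Real.Gamma (μ + n)) * regQ (η + μ + n) y := by
  have hημ : ∀ n : ℕ, 0 < η + μ + n := fun n => by positivity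
  have hcoeff : ∀ n : ℕ, x ^ n / (n ! * Gamma (μ + n)) * uGamma (η + μ + n) y =
      x ^ n / n ! * (Gamma (η + μ + n) / Gamma (μ + n)) * regQ (η + μ + n) y := fun n => by
    have : Gamma (η + μ + n) ≠ 0 := by positivity
    rw [regQ]
    field_simp
  have hsum : Summable fun n : ℕ =>
      x ^ n / n ! * (Gamma (η + μ + n) / Gamma (μ + n)) * regQ (η + μ + n) y :=
    (summable_pow_div_factorial_mul_Gamma_div_Gamma hx hμ (by positivity)).of_nonneg_of_le
      (fun n => mul_nonneg (by positivity) (regQ_nonneg (hημ n) hy))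
      (fun n => mul_le_of_le_one_right (by positivity) (regQ_le_one (hημ n) hy))
  have hx_pow : x ^ ((1 - μ) / 2) * x ^ ((μ - 1) / 2) = 1 := by
    rw [← rpow_add hx, show (1 - μ) / 2 + (μ - 1) / 2 = 0 by ring, rpow_zero]
  calc nuttallQ η μ x y
      = x ^ ((1 - μ) / 2) * ∫ t in Ioi y, exp (-x) * x ^ ((μ - 1) / 2) *
          ∑' n : ℕ, x ^ n / (n ! * Gamma (μ + n)) * (t ^ (η + μ + n - 1) * exp (-t)) := by
        rw [nuttallQ, setIntegral_congr_fun measurableSet_Ioi fun t ht =>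
          nuttallQ_integrand_eq_tsum hx.le (hy.trans_lt ht)]
    _ = exp (-x) * ∑' n : ℕ, x ^ n / (n ! * Gamma (μ + n)) * uGamma (η + μ + n) y := by
        rw [integral_const_mul, integral_Ioi_tsum_mul_rpow_mul_exp_neg (fun n => by positivity)
          hημ hy (by simpa only [hcoeff] using hsum), ← mul_assoc, ← mul_assoc, mul_comm _ (exp _),
          mul_assoc (exp _), hx_pow, mul_one]
    _ = _ := by simp only [hcoeff]
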